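/- arXiv:2501.13226 — 2 statements merged into one kernel-verified Lean document; each statement's English description precedes it below -/
import Mathlib

section
/- For any t, the value function V_t : ℕ → ℝ obtained by iterating V_{t+1}(s) = min{V_t^0(s), V_t^1(s), V_t^2(s)} starting from V₀ = 0 is monotone increasing in s, for all t ∈ ℕ, under the assumptions r₀, r₁, ρ, p, q ∈ [0,1], r₀ + r₁ ≥ 1, λ₁, λ₂ ≥ 0. -/
/-!
Induction on `t`. Writing `g s = r s * V t (s + 1) + (1 - r s) * V t 0` for the expected
continuation value, the cost of each action is `s + λ + α * g s + (1 - α) * V t 0` with `α ≥ 0`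
(`α = 1`, `1 - ρ p`, `1 - ρ q`). Since `g s = V t 0 + r s * (V t (s + 1) - V t 0)` and both factors
are nonnegative and monotone (`r` jumps from `1 - r₀` up to `r₁` because `r₀ + r₁ ≥ 1`), each
cost is monotone in `s`, and so is their minimum `V (t + 1)`.
-/

def continuationValue (r W : ℕ → ℝ) (s : ℕ) : ℝ :=
  r s * W (s + 1) + (1 - r s) * W 0

lemma continuationValue_eq (r W : ℕ → ℝ) (s : ℕ) :
    continuationValue r W s = W 0 + r s * (W (s + 1) - W 0) := by
  unfold continuationValue
  ring

lemma monotone_continuationValue {r W : ℕ → ℝ} (hr : Monotone r) (hr₀ : ∀ s, 0 ≤ r s)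
    (hW : Monotone W) : Monotone (continuationValue r W) := by
  have hgap : Monotone fun s => W (s + 1) - W 0 :=
    fun _ _ h => sub_le_sub_right (hW (Nat.add_le_add_right h 1)) _
  have hgap₀ : ∀ s, 0 ≤ W (s + 1) - W 0 := fun s => sub_nonneg.2 (hW (Nat.zero_le _))
  intro a b hab
  simp only [continuationValue_eq]
  exact add_le_add le_rfl (Monotone.mul hr hgap hr₀ hgap₀ hab)

lemma monotone_actionCost {r W : ℕ → ℝ} (hg : Monotone (continuationValue r W))
    (c : ℝ) {α : ℝ} (hα : 0 ≤ α) :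
    Monotone fun s : ℕ => (s : ℝ) + c + α * continuationValue r W s + (1 - α) * W 0 := by
  refine Monotone.add_const (Monotone.add ?_ (hg.const_mul hα)) _
  exact Nat.mono_cast.add_const c

lemma monotone_ite_eq_zero {a b : ℝ} (hab : a ≤ b) :
    Monotone fun s : ℕ => if s = 0 then a else b := by
  intro m n hmn
  dsimp only
  split_ifs <;> first | exact le_rfl | exact hab | omega

theorem aosi_value_iteration_monotone_general
    (r₀ r₁ ρ p q lam₁ lam₂ : ℝ)
    (hr₀ : r₀ ∈ Set.Icc (0:ℝ) 1)
    (hρ : ρ ∈ Set.Icc (0:ℝ) 1) (hp : p ∈ Set.Icc (0:ℝ) 1) (hq : q ∈ Set.Icc (0:ℝ) 1)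
    (hsum : 1 ≤ r₀ + r₁)
    (r : ℕ → ℝ) (hr : ∀ s, r s = if s = 0 then 1 - r₀ else r₁)
    (V : ℕ → ℕ → ℝ)
    (hV0 : ∀ s, V 0 s = 0)
    (hstep : ∀ t s, V (t + 1) s =
      min ((s : ℝ) + r s * V t (s + 1) + (1 - r s) * V t 0)
        (min ((s : ℝ) + lam₁ + (1 - ρ * p) * r s * V t (s + 1)
            + ((1 - ρ * p) * (1 - r s) + ρ * p) * V t 0)
          ((s : ℝ) + lam₂ + (1 - ρ * q) * r s * V t (s + 1)
            + ((1 - ρ * q) * (1 - r s) + ρ * q) * V t 0))) :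
    ∀ t, Monotone (V t) := by
  have hr_eq : r = fun s => if s = 0 then 1 - r₀ else r₁ := funext hr
  have hr_mono : Monotone r := hr_eq ▸ monotone_ite_eq_zero (by linarith)
  have hr_nonneg : ∀ s, 0 ≤ r s := fun s => by
    rw [hr]; split_ifs <;> linarith [hr₀.2]
  have hρp : 0 ≤ 1 - ρ * p := sub_nonneg.2 (mul_le_one₀ hρ.2 hp.1 hp.2)
  have hρq : 0 ≤ 1 - ρ * q := sub_nonneg.2 (mul_le_one₀ hρ.2 hq.1 hq.2)
  intro t
  induction t with
  | zero => simpa only [funext (hV0 ·)] using monotone_const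
  | succ t ih =>
    have hg := monotone_continuationValue hr_mono hr_nonneg ih
    have hV : V (t + 1) = fun s : ℕ =>
        min ((s : ℝ) + 0 + 1 * continuationValue r (V t) s + (1 - 1) * V t 0)
          (min ((s : ℝ) + lam₁ + (1 - ρ * p) * continuationValue r (V t) s
              + (1 - (1 - ρ * p)) * V t 0)
            ((s : ℝ) + lam₂ + (1 - ρ * q) * continuationValue r (V t) s
              + (1 - (1 - ρ * q)) * V t 0)) := by
      funext s
      rw [hstep]
      unfold continuationValue
      ring_nf
    rw [hV]
    exact (monotone_actionCost hg 0 zero_le_one).min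
      ((monotone_actionCost hg lam₁ hρp).min (monotone_actionCost hg lam₂ hρq))

/-- Every iterate of the AoSI relative value iteration, starting from 0, is monotone. -/
theorem aosi_value_iteration_monotone
    (r₀ r₁ ρ p q lam₁ lam₂ : ℝ)
    (hr₀ : r₀ ∈ Set.Icc (0:ℝ) 1) (hr₁ : r₁ ∈ Set.Icc (0:ℝ) 1)
    (hρ : ρ ∈ Set.Icc (0:ℝ) 1) (hp : p ∈ Set.Icc (0:ℝ) 1) (hq : q ∈ Set.Icc (0:ℝ) 1)
    (hsum : 1 ≤ r₀ + r₁) (hlam₁ : 0 ≤ lam₁) (hlam₂ : 0 ≤ lam₂)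
    (r : ℕ → ℝ) (hr : ∀ s, r s = if s = 0 then 1 - r₀ else r₁)
    (V : ℕ → ℕ → ℝ)
    (hV0 : ∀ s, V 0 s = 0)
    (hstep : ∀ t s, V (t + 1) s =
      min ((s : ℝ) + r s * V t (s + 1) + (1 - r s) * V t 0)
        (min ((s : ℝ) + lam₁ + (1 - ρ * p) * r s * V t (s + 1)
            + ((1 - ρ * p) * (1 - r s) + ρ * p) * V t 0)
          ((s : ℝ) + lam₂ + (1 - ρ * q) * r s * V t (s + 1)
            + ((1 - ρ * q) * (1 - r s) + ρ * q) * V t 0))) :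
    ∀ t, Monotone (V t) :=
  aosi_value_iteration_monotone_general r₀ r₁ ρ p q lam₁ lam₂ hr₀ hρ hp hq hsum r hr V hV0 hstep
end

section
/- Let 0 ≤ b, c < 1, e ≥ 0, n₂ > 0, and define u(0) = (1-b)(1-c)/[(1-b+e)(1-c) + (c-b)·e·b^{n₂-1}], u(i) = e·b^{i-1}·u(0) for 1 ≤ i ≤ n₂, and u(i) = e·b^{n₂-1}·c^{i-n₂}·u(0) for i > n₂. Then ∑_{i=0}^∞ u(i) = 1. -/
/-!
Up to the factor `u 0`, the sequence is `1`, then `e` times a finite geometric progression of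
ratio `b` on `1, …, n₂`, then a geometric tail of ratio `c`. Summing both progressions gives
`∑ u = u 0 * (1 + e * ∑_{i<n₂} bⁱ + e b^(n₂-1) c / (1 - c))`, and multiplying the bracket by
`(1 - b)(1 - c)` produces exactly the denominator of `u 0`, by `(1 - b) ∑_{i<n₂} bⁱ = 1 - b^n₂`.
-/

open Finset

theorem hasSum_of_geometric_tail {K : Type*} [NormedDivisionRing K] {f : ℕ → K} {a c : K}
    (N : ℕ) (hc : ‖c‖ < 1) (hf : ∀ i, f (i + N) = a * c ^ i) :
    HasSum f (∑ i ∈ range N, f i + a * (1 - c)⁻¹) := by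
  rw [← hasSum_nat_add_iff' N, add_sub_cancel_left, funext hf]
  exact (hasSum_geometric_of_norm_lt_one hc).mul_left a

def aosiWeight (b c e : ℝ) (n i : ℕ) : ℝ :=
  if i = 0 then 1 else if i ≤ n then e * b ^ (i - 1) else e * b ^ (n - 1) * c ^ (i - n)

theorem aosiWeight_add_succ (b c e : ℝ) (m i : ℕ) :
    aosiWeight b c e (m + 1) (i + (m + 2)) = e * b ^ m * c * c ^ i := by
  have hsub : i + (m + 2) - (m + 1) = i + 1 := by omega
  simp only [aosiWeight, if_neg (show i + (m + 2) ≠ 0 by omega),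
    if_neg (show ¬ i + (m + 2) ≤ m + 1 by omega), hsub, Nat.add_sub_cancel, pow_succ]
  ring

theorem sum_range_aosiWeight (b c e : ℝ) (m : ℕ) :
    ∑ i ∈ range (m + 2), aosiWeight b c e (m + 1) i = 1 + e * ∑ i ∈ range (m + 1), b ^ i := by
  rw [sum_range_succ', mul_sum, add_comm]
  congr 1
  refine sum_congr rfl fun i hi => ?_
  have hi : i + 1 ≤ m + 1 := by have := mem_range.mp hi; omega
  simp [aosiWeight, hi]

theorem hasSum_aosiWeight (b c e : ℝ) (m : ℕ) (hc : |c| < 1) :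
    HasSum (aosiWeight b c e (m + 1))
      (1 + e * ∑ i ∈ range (m + 1), b ^ i + e * b ^ m * c * (1 - c)⁻¹) := by
  rw [← sum_range_aosiWeight]
  exact hasSum_of_geometric_tail (m + 2) hc (aosiWeight_add_succ b c e m)

theorem aosi_normalizer_eq (b c e : ℝ) (m : ℕ) (hc : c ≠ 1) :
    (1 - b) * (1 - c) * (1 + e * ∑ i ∈ range (m + 1), b ^ i + e * b ^ m * c * (1 - c)⁻¹)
      = (1 - b + e) * (1 - c) + (c - b) * e * b ^ m := by
  have hc1 : 1 - c ≠ 0 := sub_ne_zero.mpr hc.symm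
  field_simp
  linear_combination (1 - c) * e * mul_neg_geom_sum b (m + 1)

theorem aosi_stationary_normalization_n1_zero_general
    (b c e : ℝ) (hc : 0 ≤ c) (hc' : c < 1)
    (n₂ : ℕ) (hn₂ : 0 < n₂)
    (hden : 0 < (1 - b + e) * (1 - c) + (c - b) * e * b ^ (n₂ - 1))
    (u : ℕ → ℝ)
    (hu : ∀ i, u i =
      if i = 0 then (1 - b) * (1 - c) / ((1 - b + e) * (1 - c) + (c - b) * e * b ^ (n₂ - 1))
      else if i ≤ n₂ then e * b ^ (i - 1) * u 0
      else e * b ^ (n₂ - 1) * c ^ (i - n₂) * u 0) :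
    ∑' i : ℕ, u i = 1 := by
  obtain ⟨m, rfl⟩ : ∃ m, n₂ = m + 1 := ⟨n₂ - 1, (Nat.succ_pred_eq_of_pos hn₂).symm⟩
  simp only [Nat.add_sub_cancel] at hden hu
  have hu_eq : ∀ i, u i = u 0 * aosiWeight b c e (m + 1) i := by
    intro i
    rcases eq_or_ne i 0 with rfl | hi
    · simp [aosiWeight]
    · rw [hu i]; simp only [aosiWeight, if_neg hi, Nat.add_sub_cancel]; split_ifs <;> ring
  have hu0 : u 0 = (1 - b) * (1 - c) / ((1 - b + e) * (1 - c) + (c - b) * e * b ^ m) := by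
    simpa using hu 0
  rw [← aosi_normalizer_eq b c e m hc'.ne] at hden hu0
  calc ∑' i, u i = u 0 * (1 + e * ∑ i ∈ range (m + 1), b ^ i + e * b ^ m * c * (1 - c)⁻¹) := by
        rw [tsum_congr hu_eq]
        exact ((hasSum_aosiWeight b c e m (abs_lt.mpr ⟨by linarith, hc'⟩)).mul_left _).tsum_eq
    _ = 1 := by rw [hu0, div_mul_eq_mul_div, div_self hden.ne']

/-- Normalization of the stationary distribution of the AoSI chain under a multi-threshold
policy with n₁ = 0 < n₂. -/
theorem aosi_stationary_normalization_n1_zero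
    (b c e : ℝ) (hb : 0 ≤ b) (hb' : b < 1) (hc : 0 ≤ c) (hc' : c < 1) (he : 0 ≤ e)
    (n₂ : ℕ) (hn₂ : 0 < n₂)
    (hden : 0 < (1 - b + e) * (1 - c) + (c - b) * e * b ^ (n₂ - 1))
    (u : ℕ → ℝ)
    (hu : ∀ i, u i =
      if i = 0 then (1 - b) * (1 - c) / ((1 - b + e) * (1 - c) + (c - b) * e * b ^ (n₂ - 1))
      else if i ≤ n₂ then e * b ^ (i - 1) * u 0
      else e * b ^ (n₂ - 1) * c ^ (i - n₂) * u 0) :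
    ∑' i : ℕ, u i = 1 :=
  aosi_stationary_normalization_n1_zero_general b c e hc hc' n₂ hn₂ hden u hu
end
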